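/- arXiv:0706.0234 — 2 statements merged into one kernel-verified Lean document; each statement's English description precedes it below -/
import Mathlib

section
/- (First identity of Lemma 3 of the paper, with the proportionality constant made explicit.) Let g ≥ 1, let p be an odd positive integer, let ν ≥ 1 be an integer, and let ε ∈ {0,1}^g ⊂ ℤ^g. Then for every Ω ∈ 𝔥_g: ∑_{u ∈ {0,…,2^ν −1}^g} (−1)^{ε·u} · θ_{2^ν p}[0, p·u](0, (1/(2^ν p))Ω) = 2^{νg} · θ_2[ε,0](0, (2^ν/p)Ω). (Here the left-hand side is the sum ∑_{u} χ(γ(u)) θ_{2^ν p}[0,γ(u)](0, Ω/(2^ν p)) of the paper, where γ(u) = p·u and χ is the order-2 character with χ(x) = exp(−πi ε·x), using that χ(p·u) = (−1)^{ε·u} since p is odd.) -/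
open scoped BigOperators

/-- The `n`-th term of the series defining the theta function with rational
characteristics `θ_l[ε₁,ε₂](z,Ω)` (equation (1) of the paper). -/
noncomputable def thetaTerm (g l : ℕ) (ε₁ ε₂ : Fin g → ℤ) (z : Fin g → ℂ)
    (Ω : Matrix (Fin g) (Fin g) ℂ) (n : Fin g → ℤ) : ℂ :=
  Complex.exp (↑Real.pi * Complex.I *
      (∑ i, ∑ j, ((n i : ℂ) + (ε₁ i : ℂ) / (l : ℂ)) * Ω i j *
        ((n j : ℂ) + (ε₁ j : ℂ) / (l : ℂ)))
    + 2 * ↑Real.pi * Complex.I *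
      (∑ i, ((n i : ℂ) + (ε₁ i : ℂ) / (l : ℂ)) * (z i + (ε₂ i : ℂ) / (l : ℂ))))

/-- The theta function with rational characteristics `θ_l[ε₁,ε₂](z,Ω)`. -/
noncomputable def thetaChar (g l : ℕ) (ε₁ ε₂ : Fin g → ℤ) (z : Fin g → ℂ)
    (Ω : Matrix (Fin g) (Fin g) ℂ) : ℂ :=
  ∑' n : Fin g → ℤ, thetaTerm g l ε₁ ε₂ z Ω n

/-- `Ω` belongs to the Siegel upper half space `𝔥_g`: it is symmetric and its
imaginary part is positive definite. -/
def IsSiegel {g : ℕ} (Ω : Matrix (Fin g) (Fin g) ℂ) : Prop :=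
  Ω.IsSymm ∧ (Matrix.of fun i j => (Ω i j).im).PosDef

section auxLemmas
open Complex Finset Matrix
open scoped Real

lemma summable_exp_neg_mul_int_sq {a : ℝ} (ha : 0 < a) :
    Summable fun n : ℤ => Real.exp (-a * (n : ℝ) ^ 2) := by
  have h := summable_pow_mul_jacobiTheta₂_term_bound 0 (T := a / Real.pi)
    (div_pos ha Real.pi_pos) 0
  refine h.congr fun n => ?_
  rw [pow_zero, one_mul]
  congr 1
  field_simp
  ring

lemma summable_prod_pi {f : ℤ → ℝ} (hf : Summable f) (h0 : ∀ n, 0 ≤ f n) (g : ℕ) :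
    Summable fun n : Fin g → ℤ => ∏ i, f (n i) := by
  induction g with
  | zero => exact Summable.of_finite
  | succ g ih =>
    have h2 : (0 : (Fin g → ℤ) → ℝ) ≤ fun n => ∏ i, f (n i) :=
      fun n => Finset.prod_nonneg fun i _ => h0 _
    have key : Summable fun q : ℤ × (Fin g → ℤ) => f q.1 * ∏ i, f (q.2 i) :=
      hf.mul_of_nonneg (g := fun n : Fin g → ℤ => ∏ i, f (n i)) ih h0 h2
    apply (Equiv.summable_iff (Fin.consEquiv (fun _ : Fin (g + 1) => ℤ))).mp
    refine key.congr fun q => ?_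
    simp [Fin.prod_univ_succ]

lemma posdef_bound {g : ℕ} (hg : 1 ≤ g) {Y : Matrix (Fin g) (Fin g) ℝ} (hY : Y.PosDef) :
    ∃ δ : ℝ, 0 < δ ∧ ∀ x : Fin g → ℝ, δ * (∑ i, x i ^ 2) ≤ ∑ i, ∑ j, x i * Y i j * x j := by
  haveI : Nonempty (Fin g) := Fin.pos_iff_nonempty.mp hg
  set f : (Fin g → ℝ) → ℝ := fun x => ∑ i, ∑ j, x i * Y i j * x j with hf
  have hpos : ∀ x : Fin g → ℝ, x ≠ 0 → 0 < f x := by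
    intro x hx
    have := hY.dotProduct_mulVec_pos hx
    have hexp : x ⬝ᵥ Y.mulVec x = f x := by
      simp only [dotProduct, Matrix.mulVec, dotProduct, Finset.mul_sum, hf]
      exact Finset.sum_congr rfl fun i _ => Finset.sum_congr rfl fun j _ => by ring
    simpa [hexp] using this
  have hcont : Continuous f := by
    apply continuous_finset_sum
    intro i _
    apply continuous_finset_sum
    intro j _
    exact ((continuous_apply i).mul continuous_const).mul (continuous_apply j)
  have hcompact : IsCompact (Metric.sphere (0 : Fin g → ℝ) 1) := isCompact_sphere 0 1
  have hne : (Metric.sphere (0 : Fin g → ℝ) 1).Nonempty :=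
    NormedSpace.sphere_nonempty.mpr zero_le_one
  obtain ⟨x₀, hx₀, hmin⟩ := hcompact.exists_isMinOn hne hcont.continuousOn
  have hx₀norm : ‖x₀‖ = 1 := by simpa using hx₀
  have hx₀ne : x₀ ≠ 0 := fun h => by simp [h] at hx₀norm
  have hδ0 : 0 < f x₀ := hpos x₀ hx₀ne
  have hhom : ∀ (c : ℝ) (x : Fin g → ℝ), f (c • x) = c ^ 2 * f x := by
    intro c x
    simp only [hf, Pi.smul_apply, smul_eq_mul, Finset.mul_sum]
    exact Finset.sum_congr rfl fun i _ => Finset.sum_congr rfl fun j _ => by ring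
  refine ⟨f x₀ / g, div_pos hδ0 (by exact_mod_cast hg.trans_lt' zero_lt_one), fun x => ?_⟩
  rcases eq_or_ne x 0 with rfl | hx
  · simp [hf]
  · have hnx : (0 : ℝ) < ‖x‖ := norm_pos_iff.mpr hx
    have hy : ‖x‖⁻¹ • x ∈ Metric.sphere (0 : Fin g → ℝ) 1 := by
      simp [norm_smul, abs_inv, abs_of_pos hnx, inv_mul_cancel₀ hnx.ne']
    have h1 : f x₀ ≤ f (‖x‖⁻¹ • x) := hmin hy
    rw [hhom] at h1
    have h2 : f x₀ * ‖x‖ ^ 2 ≤ f x := by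
      have := mul_le_mul_of_nonneg_right h1 (by positivity : (0 : ℝ) ≤ ‖x‖ ^ 2)
      calc f x₀ * ‖x‖ ^ 2 ≤ ‖x‖⁻¹ ^ 2 * f x * ‖x‖ ^ 2 := this
        _ = f x := by field_simp
    have h3 : ∑ i, x i ^ 2 ≤ g * ‖x‖ ^ 2 := by
      calc ∑ i, x i ^ 2 ≤ ∑ _i : Fin g, ‖x‖ ^ 2 := by
            refine Finset.sum_le_sum fun i _ => ?_
            calc x i ^ 2 = |x i| ^ 2 := (_root_.sq_abs _).symm
              _ ≤ ‖x‖ ^ 2 := by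
                  apply pow_le_pow_left₀ (abs_nonneg _)
                  simpa using norm_le_pi_norm x i
        _ = g * ‖x‖ ^ 2 := by simp [Finset.sum_const, nsmul_eq_mul]
    calc f x₀ / g * ∑ i, x i ^ 2 ≤ f x₀ / g * (g * ‖x‖ ^ 2) := by
          apply mul_le_mul_of_nonneg_left h3
            (le_of_lt (div_pos hδ0 (by exact_mod_cast hg.trans_lt' zero_lt_one)))
      _ = f x₀ * ‖x‖ ^ 2 := by
          field_simp
      _ ≤ f x := h2

lemma norm_thetaTerm (g l : ℕ) (ε₂ : Fin g → ℤ) (Ω' : Matrix (Fin g) (Fin g) ℂ)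
    (n : Fin g → ℤ) :
    ‖thetaTerm g l 0 ε₂ 0 Ω' n‖
      = Real.exp (-Real.pi * ∑ i, ∑ j, (n i : ℝ) * (Ω' i j).im * (n j : ℝ)) := by
  have hcast : ∀ i, ((ε₂ i : ℂ)) / (l : ℂ) = (((ε₂ i / l : ℝ)) : ℂ) := fun i => by
    push_cast; ring
  rw [thetaTerm, Complex.norm_exp]
  congr 1
  simp only [Pi.zero_apply, Int.cast_zero, zero_div, add_zero, zero_add, hcast,
    Complex.add_re, Complex.mul_re, Complex.mul_im, Complex.I_re, Complex.I_im,
    Complex.ofReal_re, Complex.ofReal_im, Complex.re_sum, Complex.im_sum,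
    Complex.intCast_re, Complex.intCast_im]
  simp only [Complex.re_ofNat, Complex.im_ofNat, mul_zero, zero_mul, mul_one, one_mul,
    add_zero, zero_add, sub_zero, zero_sub, Finset.sum_const_zero, neg_zero, neg_mul]

lemma summable_theta (g : ℕ) (l : ℕ) (ε₂ : Fin g → ℤ)
    (Ω' : Matrix (Fin g) (Fin g) ℂ) {δ : ℝ} (hδ : 0 < δ)
    (hbd : ∀ x : Fin g → ℝ, δ * (∑ i, x i ^ 2) ≤ ∑ i, ∑ j, x i * (Ω' i j).im * x j) :
    Summable fun n : Fin g → ℤ => thetaTerm g l 0 ε₂ 0 Ω' n := by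
  have hc : Summable fun n : Fin g → ℤ => ∏ i, Real.exp (-(Real.pi * δ) * (n i : ℝ) ^ 2) :=
    summable_prod_pi (summable_exp_neg_mul_int_sq (by positivity))
      (fun _ => (Real.exp_pos _).le) g
  refine Summable.of_norm (Summable.of_nonneg_of_le (fun n => norm_nonneg _) (fun n => ?_) hc)
  rw [norm_thetaTerm, ← Real.exp_sum]
  apply Real.exp_le_exp.mpr
  have h1 := hbd (fun i => (n i : ℝ))
  have h2 : ∑ i, (-(Real.pi * δ) * (n i : ℝ) ^ 2) = -(Real.pi * δ) * ∑ i, (n i : ℝ) ^ 2 := by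
    rw [Finset.mul_sum]
  rw [h2]
  nlinarith [mul_le_mul_of_nonneg_left h1 Real.pi_pos.le]

lemma geom_char (N : ℕ) (hN : 0 < N) (m : ℤ) :
    ∑ u : Fin N, Complex.exp (2 * ↑Real.pi * Complex.I * (m : ℂ) / (N : ℂ)) ^ (u : ℕ)
      = if (N : ℤ) ∣ m then (N : ℂ) else 0 := by
  have hN0 : (N : ℂ) ≠ 0 := Nat.cast_ne_zero.mpr hN.ne'
  have h2pi : (2 * (Real.pi : ℂ) * Complex.I) ≠ 0 := by
    simp [Real.pi_ne_zero, Complex.I_ne_zero, Complex.ofReal_ne_zero]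
  rw [Fin.sum_univ_eq_sum_range
    (fun j => Complex.exp (2 * ↑Real.pi * Complex.I * (m : ℂ) / (N : ℂ)) ^ j) N]
  by_cases h : (N : ℤ) ∣ m
  · obtain ⟨c, rfl⟩ := h
    have h1 : Complex.exp (2 * ↑Real.pi * Complex.I * ((N * c : ℤ) : ℂ) / (N : ℂ)) = 1 := by
      have he : (2 * ↑Real.pi * Complex.I * ((N * c : ℤ) : ℂ) / (N : ℂ))
          = (c : ℂ) * (2 * ↑Real.pi * Complex.I) := by
        push_cast
        field_simp
      rw [he, Complex.exp_int_mul_two_pi_mul_I]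
    rw [if_pos ⟨c, rfl⟩, h1]
    simp
  · have hz : Complex.exp (2 * ↑Real.pi * Complex.I * (m : ℂ) / (N : ℂ)) ≠ 1 := by
      intro hone
      rw [Complex.exp_eq_one_iff] at hone
      obtain ⟨c, hc⟩ := hone
      rw [div_eq_iff hN0] at hc
      apply h
      refine ⟨c, ?_⟩
      have hmc : (m : ℂ) = ((N : ℂ)) * c := by
        apply mul_left_cancel₀ h2pi
        linear_combination hc
      exact_mod_cast hmc
    rw [geom_sum_eq hz]
    have hNpow : Complex.exp (2 * ↑Real.pi * Complex.I * (m : ℂ) / (N : ℂ)) ^ N = 1 := by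
      rw [← Complex.exp_nat_mul]
      have he : (N : ℂ) * (2 * ↑Real.pi * Complex.I * (m : ℂ) / (N : ℂ))
          = (m : ℂ) * (2 * ↑Real.pi * Complex.I) := by
        field_simp
      rw [he, Complex.exp_int_mul_two_pi_mul_I]
    rw [hNpow, sub_self, zero_div, if_neg h]

end auxLemmas

/-- first identity of Lemma 3 of the paper, with the
proportionality constant made explicit:
`∑_{u ∈ {0,…,2^ν−1}^g} (−1)^{ε·u} θ_{2^ν p}[0, p·u](0, Ω/(2^ν p))
  = 2^{νg} · θ_2[ε,0](0, (2^ν/p)·Ω)`. -/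
theorem lemma3_first_identity (g : ℕ) (hg : 1 ≤ g) (p : ℕ) (hp : Odd p) (hp0 : 0 < p)
    (ν : ℕ) (hν : 1 ≤ ν) (ε : Fin g → ℤ) (hε : ∀ i, ε i = 0 ∨ ε i = 1)
    (Ω : Matrix (Fin g) (Fin g) ℂ) (hΩ : IsSiegel Ω) :
    ∑ u : Fin g → Fin (2 ^ ν),
      (-1 : ℂ) ^ (∑ i, ε i * ((u i : ℕ) : ℤ)) *
        thetaChar g (2 ^ ν * p) 0 (fun i => (p : ℤ) * ((u i : ℕ) : ℤ)) 0
          ((1 / ((2 ^ ν * p : ℕ) : ℂ)) • Ω)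
    = (2 : ℂ) ^ (ν * g) * thetaChar g 2 ε 0 0 (((2 ^ ν : ℂ) / (p : ℂ)) • Ω) := by
  obtain ⟨k, rfl⟩ : ∃ k, ν = k + 1 := ⟨ν - 1, (Nat.succ_pred_eq_of_pos hν).symm⟩
  obtain ⟨hsym, hposdef⟩ := hΩ
  obtain ⟨δ, hδ, hbd⟩ := posdef_bound hg hposdef
  have hp0' : (p : ℂ) ≠ 0 := Nat.cast_ne_zero.mpr hp0.ne'
  have hNpos : 0 < 2 ^ (k + 1) := pow_pos two_pos (k + 1)
  have h2C : ((2 : ℂ)) ^ (k + 1) ≠ 0 := pow_ne_zero _ two_ne_zero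
  have h2Z : ((2 : ℤ)) ^ (k + 1) ≠ 0 := pow_ne_zero _ two_ne_zero
  set Ω₁ : Matrix (Fin g) (Fin g) ℂ := (1 / ((2 ^ (k + 1) * p : ℕ) : ℂ)) • Ω with hΩ₁
  set Ω₂ : Matrix (Fin g) (Fin g) ℂ := ((2 ^ (k + 1) : ℂ) / (p : ℂ)) • Ω with hΩ₂
  -- lower bound for the imaginary part of Ω₁
  have him : ∀ i j : Fin g, (Ω₁ i j).im
      = (1 / ((2 ^ (k + 1) * p : ℕ) : ℝ)) * (Ω i j).im := by
    intro i j
    have h1 : (1 / ((2 ^ (k + 1) * p : ℕ) : ℂ))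
        = (((1 / ((2 ^ (k + 1) * p : ℕ) : ℝ)) : ℝ) : ℂ) := by
      rw [Complex.ofReal_div]
      norm_num
    rw [hΩ₁, Matrix.smul_apply, h1, smul_eq_mul, Complex.im_ofReal_mul]
  have hbd₁ : ∀ x : Fin g → ℝ,
      (δ / ((2 ^ (k + 1) * p : ℕ) : ℝ)) * (∑ i, x i ^ 2)
        ≤ ∑ i, ∑ j, x i * (Ω₁ i j).im * x j := by
    intro x
    have h0 := hbd x
    have hlp : (0 : ℝ) < ((2 ^ (k + 1) * p : ℕ) : ℝ) := by positivity
    calc (δ / ((2 ^ (k + 1) * p : ℕ) : ℝ)) * (∑ i, x i ^ 2)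
        = (1 / ((2 ^ (k + 1) * p : ℕ) : ℝ)) * (δ * ∑ i, x i ^ 2) := by ring
      _ ≤ (1 / ((2 ^ (k + 1) * p : ℕ) : ℝ)) *
          ∑ i, ∑ j, x i * (Matrix.of fun i j => (Ω i j).im) i j * x j :=
          mul_le_mul_of_nonneg_left h0 (by positivity)
      _ = ∑ i, ∑ j, x i * (Ω₁ i j).im * x j := by
          rw [Finset.mul_sum]
          refine Finset.sum_congr rfl fun i _ => ?_
          rw [Finset.mul_sum]
          refine Finset.sum_congr rfl fun j _ => ?_
          rw [him i j, Matrix.of_apply]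
          ring
  have hδl : 0 < δ / ((2 ^ (k + 1) * p : ℕ) : ℝ) := by positivity
  have hsummable : ∀ u : Fin g → Fin (2 ^ (k + 1)),
      Summable fun n : Fin g → ℤ =>
        thetaTerm g (2 ^ (k + 1) * p) 0 (fun i => (p : ℤ) * ((u i : ℕ) : ℤ)) 0 Ω₁ n :=
    fun u => summable_theta g _ _ Ω₁ hδl hbd₁
  -- step 1 : key pointwise identity for each u and n
  have key1 : ∀ (u : Fin g → Fin (2 ^ (k + 1))) (n : Fin g → ℤ),
      (-1 : ℂ) ^ (∑ i, ε i * ((u i : ℕ) : ℤ)) *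
        thetaTerm g (2 ^ (k + 1) * p) 0 (fun i => (p : ℤ) * ((u i : ℕ) : ℤ)) 0 Ω₁ n
      = Complex.exp (↑Real.pi * Complex.I * ∑ i, ∑ j, (n i : ℂ) * Ω₁ i j * (n j : ℂ)) *
        ∏ i, Complex.exp (2 * ↑Real.pi * Complex.I * ((n i + 2 ^ k * ε i : ℤ) : ℂ)
          / ((2 ^ (k + 1) : ℕ) : ℂ)) ^ ((u i : ℕ)) := by
    intro u n
    have e1 : ∀ m : ℤ, (-1 : ℂ) ^ m = Complex.exp (m * (↑Real.pi * Complex.I)) := fun m => by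
      rw [Complex.exp_int_mul, Complex.exp_pi_mul_I]
    simp only [thetaTerm, Pi.zero_apply, Int.cast_zero, zero_div, add_zero, zero_add]
    rw [e1, ← Complex.exp_add]
    simp only [← Complex.exp_nat_mul]
    rw [← Complex.exp_sum, ← Complex.exp_add]
    congr 1
    push_cast
    have key : (∑ x : Fin g, (ε x : ℂ) * ((u x : ℕ) : ℂ)) * (↑Real.pi * Complex.I) +
          2 * ↑Real.pi * Complex.I *
            ∑ x : Fin g, (n x : ℂ) * ((p : ℂ) * ((u x : ℕ) : ℂ) / (2 ^ (k + 1) * (p : ℂ)))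
        = ∑ x : Fin g, ((u x : ℕ) : ℂ) *
            (2 * ↑Real.pi * Complex.I * ((n x : ℂ) + 2 ^ k * (ε x : ℂ)) / 2 ^ (k + 1)) := by
      rw [Finset.sum_mul, Finset.mul_sum, ← Finset.sum_add_distrib]
      refine Finset.sum_congr rfl fun i _ => ?_
      field_simp
      ring
    linear_combination key
  -- step 2 : sum over u, via the geometric series
  have key2 : ∀ n : Fin g → ℤ,
      ∑ u : Fin g → Fin (2 ^ (k + 1)),
        (-1 : ℂ) ^ (∑ i, ε i * ((u i : ℕ) : ℤ)) *
          thetaTerm g (2 ^ (k + 1) * p) 0 (fun i => (p : ℤ) * ((u i : ℕ) : ℤ)) 0 Ω₁ n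
      = Complex.exp (↑Real.pi * Complex.I * ∑ i, ∑ j, (n i : ℂ) * Ω₁ i j * (n j : ℂ)) *
        ∏ i, (if ((2 ^ (k + 1) : ℕ) : ℤ) ∣ (n i + 2 ^ k * ε i)
          then ((2 ^ (k + 1) : ℕ) : ℂ) else 0) := by
    intro n
    rw [Finset.sum_congr rfl fun u _ => key1 u n, ← Finset.mul_sum]
    congr 1
    have hps := Finset.prod_univ_sum (fun _ : Fin g => (Finset.univ : Finset (Fin (2 ^ (k + 1)))))
      (fun i j => Complex.exp (2 * ↑Real.pi * Complex.I * ((n i + 2 ^ k * ε i : ℤ) : ℂ)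
        / ((2 ^ (k + 1) : ℕ) : ℂ)) ^ (j : ℕ))
    rw [Fintype.piFinset_univ] at hps
    exact hps.symm.trans (Finset.prod_congr rfl fun i _ => geom_char _ hNpos _)
  -- the reindexing map
  have hinj : Function.Injective
      (fun m : Fin g → ℤ => (fun i => 2 ^ (k + 1) * m i + 2 ^ k * ε i : Fin g → ℤ)) := by
    intro a b hab
    funext i
    have h := congrFun hab i
    simp only at h
    exact mul_left_cancel₀ h2Z (add_right_cancel h)
  have hsupp : Function.support
      (fun n : Fin g → ℤ =>
        Complex.exp (↑Real.pi * Complex.I * ∑ i, ∑ j, (n i : ℂ) * Ω₁ i j * (n j : ℂ)) *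
        ∏ i, (if ((2 ^ (k + 1) : ℕ) : ℤ) ∣ (n i + 2 ^ k * ε i)
          then ((2 ^ (k + 1) : ℕ) : ℂ) else 0))
      ⊆ Set.range
        (fun m : Fin g → ℤ => (fun i => 2 ^ (k + 1) * m i + 2 ^ k * ε i : Fin g → ℤ)) := by
    intro n hn
    rw [Function.mem_support] at hn
    have hprodne : (∏ i, (if ((2 ^ (k + 1) : ℕ) : ℤ) ∣ (n i + 2 ^ k * ε i)
        then ((2 ^ (k + 1) : ℕ) : ℂ) else 0)) ≠ 0 := fun h0 => hn (by rw [h0, mul_zero])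
    have hdvd : ∀ i, ((2 ^ (k + 1) : ℕ) : ℤ) ∣ (n i + 2 ^ k * ε i) := by
      intro i
      by_contra hi
      exact hprodne (Finset.prod_eq_zero (Finset.mem_univ i) (by rw [if_neg hi]))
    refine ⟨fun i => (n i + 2 ^ k * ε i) / ((2 ^ (k + 1) : ℕ) : ℤ) - ε i, funext fun i => ?_⟩
    simp only
    have hq := Int.ediv_mul_cancel (hdvd i)
    push_cast at hq ⊢
    linear_combination hq
  -- divisibility on the range, and identification with the RHS theta terms
  have key3 : ∀ m : Fin g → ℤ,
      Complex.exp (↑Real.pi * Complex.I * ∑ i, ∑ j,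
          (((2 ^ (k + 1) * m i + 2 ^ k * ε i : ℤ)) : ℂ) * Ω₁ i j *
          (((2 ^ (k + 1) * m j + 2 ^ k * ε j : ℤ)) : ℂ)) *
        ∏ i, (if ((2 ^ (k + 1) : ℕ) : ℤ) ∣ ((2 ^ (k + 1) * m i + 2 ^ k * ε i) + 2 ^ k * ε i)
          then ((2 ^ (k + 1) : ℕ) : ℂ) else 0)
      = ((2 ^ (k + 1) : ℕ) : ℂ) ^ g * thetaTerm g 2 ε 0 0 Ω₂ m := by
    intro m
    have hdvd : ∀ i : Fin g,
        ((2 ^ (k + 1) : ℕ) : ℤ) ∣ ((2 ^ (k + 1) * m i + 2 ^ k * ε i) + 2 ^ k * ε i) :=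
      fun i => ⟨m i + ε i, by push_cast; ring⟩
    have hprod : (∏ i : Fin g,
        (if ((2 ^ (k + 1) : ℕ) : ℤ) ∣ ((2 ^ (k + 1) * m i + 2 ^ k * ε i) + 2 ^ k * ε i)
          then ((2 ^ (k + 1) : ℕ) : ℂ) else 0)) = ((2 ^ (k + 1) : ℕ) : ℂ) ^ g := by
      rw [Finset.prod_congr rfl fun i _ => if_pos (hdvd i), Finset.prod_const,
        Finset.card_univ, Fintype.card_fin]
    rw [hprod, mul_comm]
    congr 1
    rw [thetaTerm]
    simp only [Pi.zero_apply, Int.cast_zero, zero_div, add_zero, zero_add, mul_zero,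
      Finset.sum_const_zero]
    congr 1
    congr 1
    refine Finset.sum_congr rfl fun i _ => ?_
    refine Finset.sum_congr rfl fun j _ => ?_
    simp only [hΩ₁, hΩ₂, Matrix.smul_apply, smul_eq_mul]
    push_cast
    field_simp
    ring
  -- put everything together
  calc ∑ u : Fin g → Fin (2 ^ (k + 1)),
        (-1 : ℂ) ^ (∑ i, ε i * ((u i : ℕ) : ℤ)) *
          thetaChar g (2 ^ (k + 1) * p) 0 (fun i => (p : ℤ) * ((u i : ℕ) : ℤ)) 0 Ω₁
      = ∑ u : Fin g → Fin (2 ^ (k + 1)), ∑' n : Fin g → ℤ,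
          (-1 : ℂ) ^ (∑ i, ε i * ((u i : ℕ) : ℤ)) *
            thetaTerm g (2 ^ (k + 1) * p) 0 (fun i => (p : ℤ) * ((u i : ℕ) : ℤ)) 0 Ω₁ n := by
        refine Finset.sum_congr rfl fun u _ => ?_
        rw [thetaChar, tsum_mul_left]
    _ = ∑' n : Fin g → ℤ, ∑ u : Fin g → Fin (2 ^ (k + 1)),
          (-1 : ℂ) ^ (∑ i, ε i * ((u i : ℕ) : ℤ)) *
            thetaTerm g (2 ^ (k + 1) * p) 0 (fun i => (p : ℤ) * ((u i : ℕ) : ℤ)) 0 Ω₁ n :=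
        (Summable.tsum_finsetSum fun u _ => (hsummable u).mul_left _).symm
    _ = ∑' n : Fin g → ℤ,
          (Complex.exp (↑Real.pi * Complex.I * ∑ i, ∑ j, (n i : ℂ) * Ω₁ i j * (n j : ℂ)) *
          ∏ i, (if ((2 ^ (k + 1) : ℕ) : ℤ) ∣ (n i + 2 ^ k * ε i)
            then ((2 ^ (k + 1) : ℕ) : ℂ) else 0)) := tsum_congr key2
    _ = ∑' m : Fin g → ℤ,
          (Complex.exp (↑Real.pi * Complex.I * ∑ i, ∑ j,
            (((2 ^ (k + 1) * m i + 2 ^ k * ε i : ℤ)) : ℂ) * Ω₁ i j *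
            (((2 ^ (k + 1) * m j + 2 ^ k * ε j : ℤ)) : ℂ)) *
          ∏ i, (if ((2 ^ (k + 1) : ℕ) : ℤ) ∣ ((2 ^ (k + 1) * m i + 2 ^ k * ε i) + 2 ^ k * ε i)
            then ((2 ^ (k + 1) : ℕ) : ℂ) else 0)) := (hinj.tsum_eq hsupp).symm
    _ = ∑' m : Fin g → ℤ, ((2 ^ (k + 1) : ℕ) : ℂ) ^ g * thetaTerm g 2 ε 0 0 Ω₂ m :=
        tsum_congr key3
    _ = ((2 ^ (k + 1) : ℕ) : ℂ) ^ g * thetaChar g 2 ε 0 0 Ω₂ := by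
        rw [thetaChar, tsum_mul_left]
    _ = (2 : ℂ) ^ ((k + 1) * g) * thetaChar g 2 ε 0 0 Ω₂ := by
        congr 1
        push_cast
        rw [← pow_mul]
end

section
/- (Analytic form of the Riemann equations for the theta null point, Theorem 2.6 of the paper.) Let g ≥ 1, let N ≥ 2 be an even integer, let Ω ∈ 𝔥_g, set a_w := θ_N[0,w](0, (1/N)Ω) for w ∈ ℤ^g, and for c ∈ {0,1}^g define F_c(v,w) := ∑_{t ∈ {0,1}^g} (−1)^{c·t} · a_{v+(N/2)t} · a_{w+(N/2)t}. If (v₁,w₁,x₁,y₁) and (v₂,w₂,x₂,y₂) in (ℤ^g)^4 are such that the 4-tuple of vectors (v₁+w₁, v₁−w₁, x₁+y₁, x₁−y₁) is a permutation of the 4-tuple (v₂+w₂, v₂−w₂, x₂+y₂, x₂−y₂), then for every c ∈ {0,1}^g one has F_c(v₁,w₁) · F_c(x₁,y₁) = F_c(v₂,w₂) · F_c(x₂,y₂). -/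
open scoped BigOperators

/-- The level-`N` theta null values `a_w := θ_N[0,w](0, Ω/N)`. -/
noncomputable def thetaNull (g N : ℕ) (Ω : Matrix (Fin g) (Fin g) ℂ)
    (w : Fin g → ℤ) : ℂ :=
  thetaChar g N 0 w 0 ((1 / (N : ℂ)) • Ω)

/-- `F_c(v,w) := ∑_{t ∈ {0,1}^g} (−1)^{c·t} a_{v+(N/2)t} a_{w+(N/2)t}`. -/
noncomputable def riemannF (g N : ℕ) (Ω : Matrix (Fin g) (Fin g) ℂ)
    (c : Fin g → Fin 2) (v w : Fin g → ℤ) : ℂ :=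
  ∑ t : Fin g → Fin 2,
    (-1 : ℂ) ^ (∑ i, (c i : ℕ) * (t i : ℕ)) *
      thetaNull g N Ω (fun i => v i + ((N / 2 : ℕ) : ℤ) * ((t i : ℕ) : ℤ)) *
        thetaNull g N Ω (fun i => w i + ((N / 2 : ℕ) : ℤ) * ((t i : ℕ) : ℤ))

namespace RA

noncomputable section

variable (g N : ℕ) (Ω : Matrix (Fin g) (Fin g) ℂ)

/-- complex quadratic form -/
def Qc (m : Fin g → ℤ) : ℂ := ∑ i, ∑ j, (m i : ℂ) * Ω i j * (m j : ℂ)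

/-- complex pairing -/
def Lc (m w : Fin g → ℤ) : ℂ := ∑ i, (m i : ℂ) * (w i : ℂ)

/-- real quadratic form attached to the imaginary part -/
def Qr (m : Fin g → ℤ) : ℝ := ∑ i, ∑ j, (m i : ℝ) * (Ω i j).im * (m j : ℝ)

/-- term of the theta null series -/
def eT (w m : Fin g → ℤ) : ℂ :=
  Complex.exp (↑Real.pi * Complex.I / (N : ℂ) * Qc g Ω m
    + 2 * ↑Real.pi * Complex.I / (N : ℂ) * Lc g m w)

/-- term of the half-lattice series -/
def hT (u p : Fin g → ℤ) : ℂ :=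
  Complex.exp (↑Real.pi * Complex.I / (2 * (N : ℂ)) * Qc g Ω p
    + ↑Real.pi * Complex.I / (N : ℂ) * Lc g p u)

def cInt (c : Fin g → Fin 2) : Fin g → ℤ := fun i => ((c i : ℕ) : ℤ)

def sg (s : ℤ) : ℂ := ((s.negOnePow : ℤ) : ℂ)

/-- the one-variable series -/
def G (c : Fin g → Fin 2) (u : Fin g → ℤ) : ℂ :=
  ∑' k : Fin g → ℤ, hT g N Ω u (fun i => cInt g c i + 2 * k i)

lemma thetaNull_eq (w : Fin g → ℤ) : thetaNull g N Ω w = ∑' m, eT g N Ω w m := by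
  refine tsum_congr fun m => ?_
  unfold thetaTerm eT Qc Lc
  congr 1
  have h1 : ∑ i, ∑ j, ((m i : ℂ) + ((0 : Fin g → ℤ) i : ℂ) / (N : ℂ)) *
      ((1 / (N : ℂ)) • Ω) i j * ((m j : ℂ) + ((0 : Fin g → ℤ) j : ℂ) / (N : ℂ))
      = (1 / (N : ℂ)) * ∑ i, ∑ j, (m i : ℂ) * Ω i j * (m j : ℂ) := by
    rw [Finset.mul_sum]
    refine Finset.sum_congr rfl fun i _ => ?_
    rw [Finset.mul_sum]
    refine Finset.sum_congr rfl fun j _ => ?_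
    simp only [Pi.zero_apply, Int.cast_zero, zero_div, add_zero, Matrix.smul_apply,
      smul_eq_mul]
    ring
  have h2 : ∑ i, ((m i : ℂ) + ((0 : Fin g → ℤ) i : ℂ) / (N : ℂ)) *
      ((0 : Fin g → ℂ) i + (w i : ℂ) / (N : ℂ))
      = (1 / (N : ℂ)) * ∑ i, (m i : ℂ) * (w i : ℂ) := by
    rw [Finset.mul_sum]
    refine Finset.sum_congr rfl fun i _ => ?_
    simp only [Pi.zero_apply, Int.cast_zero, zero_div, add_zero, zero_add]
    ring
  rw [h1, h2]
  ring

lemma Qc_im (m : Fin g → ℤ) : (Qc g Ω m).im = Qr g Ω m := by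
  unfold Qc Qr
  rw [Complex.im_sum]
  refine Finset.sum_congr rfl fun i _ => ?_
  rw [Complex.im_sum]
  refine Finset.sum_congr rfl fun j _ => ?_
  simp [Complex.mul_im, Complex.mul_re]

lemma Lc_im (m w : Fin g → ℤ) : (Lc g m w).im = 0 := by
  unfold Lc
  rw [Complex.im_sum]
  refine Finset.sum_eq_zero fun i _ => ?_
  simp [Complex.mul_im]

lemma norm_eT (w m : Fin g → ℤ) :
    ‖eT g N Ω w m‖ = Real.exp (-(Real.pi / N * Qr g Ω m)) := by
  unfold eT
  rw [Complex.norm_exp]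
  congr 1
  have hc : (↑Real.pi * Complex.I / (N : ℂ)) = ((Real.pi / N : ℝ) : ℂ) * Complex.I := by
    push_cast; ring
  have hc2 : (2 * ↑Real.pi * Complex.I / (N : ℂ)) = ((2 * Real.pi / N : ℝ) : ℂ) * Complex.I := by
    push_cast; ring
  rw [hc, hc2]
  simp only [Complex.add_re, Complex.mul_re, Complex.mul_im, Complex.ofReal_re,
    Complex.ofReal_im, Complex.I_re, Complex.I_im, Qc_im, Lc_im]
  ring

lemma norm_hT (u p : Fin g → ℤ) :
    ‖hT g N Ω u p‖ = Real.exp (-(Real.pi / (2 * N) * Qr g Ω p)) := by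
  unfold hT
  rw [Complex.norm_exp]
  congr 1
  have hc : (↑Real.pi * Complex.I / (2 * (N : ℂ))) = ((Real.pi / (2 * N) : ℝ) : ℂ) * Complex.I := by
    push_cast; ring
  have hc2 : (↑Real.pi * Complex.I / (N : ℂ)) = ((Real.pi / N : ℝ) : ℂ) * Complex.I := by
    push_cast; ring
  rw [hc, hc2]
  simp only [Complex.add_re, Complex.mul_re, Complex.mul_im, Complex.ofReal_re,
    Complex.ofReal_im, Complex.I_re, Complex.I_im, Qc_im, Lc_im]
  ring


/-- real quadratic form on real vectors -/
def qf (x : Fin g → ℝ) : ℝ := ∑ i, ∑ j, x i * (Ω i j).im * x j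

lemma summable_pi_prod {φ : ℤ → ℝ} (h : Summable φ) (hnn : ∀ n, 0 ≤ φ n) (G : ℕ) :
    Summable (fun m : Fin G → ℤ => ∏ i, φ (m i)) := by
  induction G with
  | zero =>
      haveI : Subsingleton (Fin 0 → ℤ) := ⟨fun a b => funext fun i => i.elim0⟩
      exact Summable.of_finite
  | succ n ih =>
      have key : Summable (fun p : ℤ × (Fin n → ℤ) => φ p.1 * ∏ i, φ (p.2 i)) :=
        Summable.mul_of_nonneg (g := fun m : Fin n → ℤ => ∏ i, φ (m i)) h ih
          (fun x => hnn x) (fun m => Finset.prod_nonneg fun i _ => hnn _)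
      rw [← Equiv.summable_iff (Fin.consEquiv fun _ => ℤ)]
      refine key.congr fun p => ?_
      simp [Fin.prod_univ_succ]

lemma summable_exp_int_sq {b : ℝ} (hb : 0 < b) :
    Summable fun n : ℤ => Real.exp (-b * (n : ℝ) ^ 2) := by
  have hgeo : Summable fun n : ℕ => Real.exp (-b) ^ n := by
    refine summable_geometric_of_lt_one (Real.exp_nonneg _) ?_
    have := Real.exp_lt_exp.mpr (show -b < 0 by linarith)
    simpa using this
  have hnat : Summable fun n : ℕ => Real.exp (-b * (n : ℝ) ^ 2) := by
    refine Summable.of_nonneg_of_le (fun n => (Real.exp_pos _).le) (fun n => ?_) hgeo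
    rw [← Real.exp_nat_mul]
    apply Real.exp_le_exp.2
    have h1 : (n : ℝ) ≤ (n : ℝ) ^ 2 := by
      rcases Nat.eq_zero_or_pos n with h | h
      · simp [h]
      · have h2 : (1 : ℝ) ≤ (n : ℝ) := by exact_mod_cast h
        nlinarith
    nlinarith
  refine Summable.of_nat_of_neg_add_one hnat ?_
  have hcomp : Summable fun n : ℕ => Real.exp (-b * ((n + 1 : ℕ) : ℝ) ^ 2) :=
    hnat.comp_injective (add_left_injective 1)
  refine hcomp.congr fun n => ?_
  congr 1
  push_cast
  ring

lemma quad_bound (hΩ : IsSiegel Ω) (hg : 1 ≤ g) :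
    ∃ ε > 0, ∀ x : Fin g → ℝ, ε * ∑ i, x i ^ 2 ≤ qf g Ω x := by
  have hform : ∀ x : Fin g → ℝ,
      dotProduct (star x) (Matrix.mulVec (Matrix.of fun i j => (Ω i j).im) x)
        = qf g Ω x := by
    intro x
    simp only [star_trivial, dotProduct, Matrix.mulVec, Matrix.of_apply, qf]
    refine Finset.sum_congr rfl fun i _ => ?_
    rw [Finset.mul_sum]
    exact Finset.sum_congr rfl fun j _ => by ring
  have hcont : Continuous (qf g Ω) := by
    refine continuous_finset_sum _ fun i _ => continuous_finset_sum _ fun j _ => ?_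
    exact ((continuous_apply i).mul continuous_const).mul (continuous_apply j)
  set S : Set (Fin g → ℝ) := {x | ∑ i, x i ^ 2 = 1} with hS_def
  have hSclosed : IsClosed S :=
    isClosed_eq (continuous_finset_sum _ fun i _ => (continuous_apply i).pow 2) continuous_const
  have hSsub : S ⊆ Metric.closedBall 0 1 := by
    intro x hx
    rw [Metric.mem_closedBall, dist_zero_right]
    refine (pi_norm_le_iff_of_nonneg (by norm_num)).2 fun i => ?_
    have hi : x i ^ 2 ≤ 1 := by
      rw [← hx]
      exact Finset.single_le_sum (fun j _ => sq_nonneg (x j)) (Finset.mem_univ i)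
    rw [Real.norm_eq_abs]
    nlinarith [abs_nonneg (x i), sq_abs (x i)]
  have hScompact : IsCompact S :=
    (isCompact_closedBall (0 : Fin g → ℝ) 1).of_isClosed_subset hSclosed hSsub
  have hSne : S.Nonempty := by
    have i0 : Fin g := ⟨0, hg⟩
    set y : Fin g → ℝ := Pi.single i0 1 with hy
    refine ⟨y, ?_⟩
    have h1 : ∀ i, y i ^ 2 = if i = i0 then 1 else 0 := by
      intro i
      by_cases h : i = i0 <;> simp [hy, Pi.single_apply, h]
    show ∑ i, y i ^ 2 = 1
    simp_rw [h1]
    simp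
  obtain ⟨x₀, hx₀S, hmin⟩ := hScompact.exists_isMinOn hSne hcont.continuousOn
  rw [isMinOn_iff] at hmin
  have hx₀ne : x₀ ≠ 0 := by
    intro h
    have : (∑ i, x₀ i ^ 2) = 1 := hx₀S
    rw [h] at this
    simp at this
  have hε : 0 < qf g Ω x₀ := by
    have := hΩ.2.dotProduct_mulVec_pos hx₀ne
    rwa [hform] at this
  refine ⟨qf g Ω x₀, hε, fun x => ?_⟩
  by_cases hx : x = 0
  · subst hx
    simp [qf]
  · have hs : 0 < ∑ i, x i ^ 2 := by
      have hex : ∃ i, x i ≠ 0 := by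
        by_contra h
        push_neg at h
        exact hx (funext h)
      obtain ⟨i, hi⟩ := hex
      refine Finset.sum_pos' (fun j _ => sq_nonneg _) ⟨i, Finset.mem_univ i, by positivity⟩
    set s := Real.sqrt (∑ i, x i ^ 2) with hs_def
    have hs0 : 0 < s := Real.sqrt_pos.2 hs
    have hs2 : s ^ 2 = ∑ i, x i ^ 2 := Real.sq_sqrt hs.le
    have hsq : ∀ c : ℝ, ∀ y : Fin g → ℝ, qf g Ω (fun i => c * y i) = c ^ 2 * qf g Ω y := by
      intro c y
      unfold qf
      rw [Finset.mul_sum]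
      refine Finset.sum_congr rfl fun i _ => ?_
      rw [Finset.mul_sum]
      exact Finset.sum_congr rfl fun j _ => by ring
    have hy : (fun i => s⁻¹ * x i) ∈ S := by
      show ∑ i, (s⁻¹ * x i) ^ 2 = 1
      have h3 : ∑ i, (s⁻¹ * x i) ^ 2 = s⁻¹ ^ 2 * ∑ i, x i ^ 2 := by
        rw [Finset.mul_sum]
        exact Finset.sum_congr rfl fun i _ => by ring
      rw [h3, ← hs2]
      field_simp
    have hle := hmin _ hy
    rw [hsq] at hle
    rw [← hs2]
    calc qf g Ω x₀ * s ^ 2 ≤ (s⁻¹ ^ 2 * qf g Ω x) * s ^ 2 :=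
          mul_le_mul_of_nonneg_right hle (sq_nonneg s)
      _ = qf g Ω x := by field_simp

lemma summable_exp_neg_mul_Qr (hΩ : IsSiegel Ω) (hg : 1 ≤ g) {a : ℝ} (ha : 0 < a) :
    Summable fun m : Fin g → ℤ => Real.exp (-(a * Qr g Ω m)) := by
  obtain ⟨ε, hε, hb⟩ := quad_bound g Ω hΩ hg
  have hsum : Summable (fun m : Fin g → ℤ => ∏ i, Real.exp (-(a * ε) * (m i : ℝ) ^ 2)) :=
    summable_pi_prod (summable_exp_int_sq (by positivity)) (fun n => (Real.exp_pos _).le) g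
  have hsum' : Summable (fun m : Fin g → ℤ => Real.exp (-(a * ε) * ∑ i, (m i : ℝ) ^ 2)) := by
    refine hsum.congr fun m => ?_
    rw [Finset.mul_sum, Real.exp_sum]
  refine Summable.of_nonneg_of_le (fun m => (Real.exp_pos _).le)
    (fun m => Real.exp_le_exp.2 ?_) hsum'
  have h1 := hb (fun i => (m i : ℝ))
  have h2 : Qr g Ω m = qf g Ω (fun i => (m i : ℝ)) := rfl
  nlinarith [mul_le_mul_of_nonneg_left h1 ha.le]

lemma summable_norm_eT (hΩ : IsSiegel Ω) (hg : 1 ≤ g) (hN : 2 ≤ N) (w : Fin g → ℤ) :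
    Summable fun m => ‖eT g N Ω w m‖ := by
  simp only [norm_eT]
  have hNpos : (0 : ℝ) < N := by exact_mod_cast (by omega : 0 < N)
  exact summable_exp_neg_mul_Qr g Ω hΩ hg (div_pos Real.pi_pos hNpos)

lemma summable_norm_hT (hΩ : IsSiegel Ω) (hg : 1 ≤ g) (hN : 2 ≤ N) (u : Fin g → ℤ) :
    Summable fun p => ‖hT g N Ω u p‖ := by
  simp only [norm_hT]
  have hNpos : (0 : ℝ) < N := by exact_mod_cast (by omega : 0 < N)
  exact summable_exp_neg_mul_Qr g Ω hΩ hg (div_pos Real.pi_pos (by linarith))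

lemma shift_injective (c : Fin g → Fin 2) :
    Function.Injective (fun k : Fin g → ℤ => (fun i => cInt g c i + 2 * k i : Fin g → ℤ)) := by
  intro a b hab
  funext i
  have := congrFun hab i
  dsimp at this
  omega

lemma summable_norm_hT_shift (hΩ : IsSiegel Ω) (hg : 1 ≤ g) (hN : 2 ≤ N)
    (c : Fin g → Fin 2) (u : Fin g → ℤ) :
    Summable fun k : Fin g → ℤ => ‖hT g N Ω u (fun i => cInt g c i + 2 * k i)‖ :=
  (summable_norm_hT g N Ω hΩ hg hN u).comp_injective (shift_injective g c)


lemma sg_even {s : ℤ} (h : Even s) : sg s = 1 := by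
  simp [sg, Int.negOnePow_even _ h]

lemma sg_odd {s : ℤ} (h : Odd s) : sg s = -1 := by
  simp [sg, Int.negOnePow_odd _ h]

lemma sg_eq_or (s : ℤ) : sg s = 1 ∨ sg s = -1 := by
  rcases Int.even_or_odd s with h | h
  · exact Or.inl (sg_even h)
  · exact Or.inr (sg_odd h)

lemma norm_sg (s : ℤ) : ‖sg s‖ = 1 := by
  rcases sg_eq_or s with h | h <;> simp [h]

lemma sg_add (a b : ℤ) : sg (a + b) = sg a * sg b := by
  unfold sg
  rw [Int.negOnePow_add]
  push_cast
  ring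

lemma sg_natpow (k : ℕ) : ((-1 : ℂ)) ^ k = sg (k : ℤ) := by
  rcases Nat.even_or_odd k with h | h
  · rw [h.neg_one_pow, sg_even (by exact_mod_cast h)]
  · rw [h.neg_one_pow, sg_odd (by exact_mod_cast h)]

lemma sg_sum {ι : Type*} (s : Finset ι) (f : ι → ℤ) :
    sg (∑ i ∈ s, f i) = ∏ i ∈ s, sg (f i) := by
  induction s using Finset.cons_induction with
  | empty => simp [sg]
  | cons i s hi ih => rw [Finset.sum_cons, Finset.prod_cons, sg_add, ih]

lemma exp_pi_I_int (s : ℤ) :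
    Complex.exp ((s : ℂ) * (↑Real.pi * Complex.I)) = sg s := by
  rw [Complex.exp_int_mul, Complex.exp_pi_mul_I]
  rcases Int.even_or_odd s with h | h
  · rw [h.neg_one_zpow, sg_even h]
  · rw [h.neg_one_zpow, sg_odd h]

lemma sum_sg (d : Fin g → ℤ) :
    ∑ t : Fin g → Fin 2, sg (∑ i, d i * ((t i : ℕ) : ℤ))
      = if ∀ i, Even (d i) then (2 : ℂ) ^ g else 0 := by
  have h1 : ∀ t : Fin g → Fin 2,
      sg (∑ i, d i * ((t i : ℕ) : ℤ)) = ∏ i, sg (d i * ((t i : ℕ) : ℤ)) :=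
    fun t => sg_sum _ _
  simp_rw [h1]
  have h2 : ∑ t : Fin g → Fin 2, ∏ i, sg (d i * ((t i : ℕ) : ℤ))
      = ∏ i, ∑ a : Fin 2, sg (d i * ((a : ℕ) : ℤ)) := by
    rw [Finset.prod_univ_sum]
    rw [Fintype.piFinset_univ]
  rw [h2]
  have h3 : ∀ i, ∑ a : Fin 2, sg (d i * ((a : ℕ) : ℤ)) = 1 + sg (d i) := by
    intro i
    rw [Fin.sum_univ_two]
    norm_num [sg_even (by norm_num : Even (0 : ℤ))]
  simp_rw [h3]
  by_cases h : ∀ i, Even (d i)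
  · rw [if_pos h]
    have h4 : ∀ i : Fin g, (1 + sg (d i)) = 2 := fun i => by rw [sg_even (h i)]; norm_num
    simp_rw [h4]
    simp
  · rw [if_neg h]
    push_neg at h
    obtain ⟨i, hi⟩ := h
    refine Finset.prod_eq_zero (Finset.mem_univ i) ?_
    rw [sg_odd (Int.not_even_iff_odd.1 hi)]
    ring


lemma thetaNull_shift (hN : 2 ≤ N) (hNe : Even N) (v : Fin g → ℤ) (t : Fin g → Fin 2) :
    thetaNull g N Ω (fun i => v i + ((N / 2 : ℕ) : ℤ) * ((t i : ℕ) : ℤ))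
      = ∑' m, eT g N Ω v m * sg (∑ i, m i * ((t i : ℕ) : ℤ)) := by
  rw [thetaNull_eq]
  refine tsum_congr fun m => ?_
  obtain ⟨M, hM⟩ := hNe
  have hM2 : N / 2 = M := by omega
  have hMne : (M : ℂ) ≠ 0 := by
    have : M ≠ 0 := by omega
    exact_mod_cast Nat.cast_ne_zero.2 this
  unfold eT
  have hsplit : Lc g m (fun i => v i + ((N / 2 : ℕ) : ℤ) * ((t i : ℕ) : ℤ))
      = Lc g m v + ((M : ℕ) : ℂ) * ((∑ i, m i * ((t i : ℕ) : ℤ) : ℤ) : ℂ) := by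
    unfold Lc
    dsimp only
    simp only [hM2]
    push_cast
    simp only [Finset.mul_sum, ← Finset.sum_add_distrib]
    refine Finset.sum_congr rfl fun i _ => ?_
    ring
  rw [hsplit, mul_add, ← add_assoc, Complex.exp_add]
  congr 1
  have hNC : (N : ℂ) = 2 * (M : ℂ) := by
    rw [hM]; push_cast; ring
  rw [show 2 * ↑Real.pi * Complex.I / (N : ℂ)
        * (((M : ℕ) : ℂ) * ((∑ i, m i * ((t i : ℕ) : ℤ) : ℤ) : ℂ))
      = ((∑ i, m i * ((t i : ℕ) : ℤ) : ℤ) : ℂ) * (↑Real.pi * Complex.I) by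
    rw [hNC]; field_simp]
  exact exp_pi_I_int _

lemma eT_mul_eT (hN : 2 ≤ N) (c : Fin g → Fin 2) (v w k j : Fin g → ℤ) :
    eT g N Ω v (fun i => cInt g c i + k i + j i) * eT g N Ω w (fun i => k i - j i)
      = hT g N Ω (v + w) (fun i => cInt g c i + 2 * k i)
          * hT g N Ω (v - w) (fun i => cInt g c i + 2 * j i) := by
  have hNne : (N : ℂ) ≠ 0 := by
    have : N ≠ 0 := by omega
    exact_mod_cast Nat.cast_ne_zero.2 this
  unfold eT hT
  rw [← Complex.exp_add, ← Complex.exp_add]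
  congr 1
  have hQ : Qc g Ω (fun i => cInt g c i + 2 * k i) + Qc g Ω (fun i => cInt g c i + 2 * j i)
      = 2 * (Qc g Ω (fun i => cInt g c i + k i + j i) + Qc g Ω (fun i => k i - j i)) := by
    unfold Qc
    dsimp only
    simp only [← Finset.sum_add_distrib, Finset.mul_sum]
    refine Finset.sum_congr rfl fun i _ => ?_
    refine Finset.sum_congr rfl fun l _ => ?_
    push_cast
    ring
  have hL : Lc g (fun i => cInt g c i + 2 * k i) (v + w)
        + Lc g (fun i => cInt g c i + 2 * j i) (v - w)
      = 2 * (Lc g (fun i => cInt g c i + k i + j i) v + Lc g (fun i => k i - j i) w) := by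
    unfold Lc
    dsimp only [Pi.add_apply, Pi.sub_apply]
    simp only [← Finset.sum_add_distrib, Finset.mul_sum]
    refine Finset.sum_congr rfl fun i _ => ?_
    push_cast
    ring
  simp only [div_mul_eq_div_div]
  linear_combination (-(↑Real.pi * Complex.I / 2 / (N : ℂ))) * hQ
    - (↑Real.pi * Complex.I / (N : ℂ)) * hL


lemma riemannF_eq (hg : 1 ≤ g) (hN : 2 ≤ N) (hNe : Even N) (hΩ : IsSiegel Ω)
    (c : Fin g → Fin 2) (v w : Fin g → ℤ) :
    riemannF g N Ω c v w = 2 ^ g * G g N Ω c (v + w) * G g N Ω c (v - w) := by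
  classical
  have hsum_v : Summable fun m => ‖eT g N Ω v m‖ := summable_norm_eT g N Ω hΩ hg hN v
  have hsum_w : Summable fun m => ‖eT g N Ω w m‖ := summable_norm_eT g N Ω hΩ hg hN w
  set f : (Fin g → Fin 2) → ((Fin g → ℤ) × (Fin g → ℤ)) → ℂ := fun t mn =>
    sg (∑ i, (cInt g c i + mn.1 i + mn.2 i) * ((t i : ℕ) : ℤ))
      * (eT g N Ω v mn.1 * eT g N Ω w mn.2) with hf_def
  have step1 : ∀ t : Fin g → Fin 2,
      (-1 : ℂ) ^ (∑ i, (c i : ℕ) * (t i : ℕ)) *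
        thetaNull g N Ω (fun i => v i + ((N / 2 : ℕ) : ℤ) * ((t i : ℕ) : ℤ)) *
        thetaNull g N Ω (fun i => w i + ((N / 2 : ℕ) : ℤ) * ((t i : ℕ) : ℤ))
      = ∑' mn : (Fin g → ℤ) × (Fin g → ℤ), f t mn := by
    intro t
    rw [thetaNull_shift g N Ω hN hNe v t, thetaNull_shift g N Ω hN hNe w t]
    have hv' : Summable fun m => ‖eT g N Ω v m * sg (∑ i, m i * ((t i : ℕ) : ℤ))‖ := by
      simp only [norm_mul, norm_sg, mul_one]
      exact hsum_v
    have hw' : Summable fun m => ‖eT g N Ω w m * sg (∑ i, m i * ((t i : ℕ) : ℤ))‖ := by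
      simp only [norm_mul, norm_sg, mul_one]
      exact hsum_w
    rw [mul_assoc, tsum_mul_tsum_of_summable_norm hv' hw', ← tsum_mul_left]
    refine tsum_congr fun mn => ?_
    have hsplitsum : (∑ i, (cInt g c i + mn.1 i + mn.2 i) * ((t i : ℕ) : ℤ))
        = ((∑ i, (c i : ℕ) * (t i : ℕ) : ℕ) : ℤ)
          + ((∑ i, mn.1 i * ((t i : ℕ) : ℤ)) + (∑ i, mn.2 i * ((t i : ℕ) : ℤ))) := by
      push_cast
      simp only [← Finset.sum_add_distrib]
      refine Finset.sum_congr rfl fun i _ => ?_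
      simp only [cInt]
      ring
    rw [hf_def]
    dsimp only
    rw [hsplitsum, sg_add, sg_add, sg_natpow]
    ring
  have hfn : Summable fun mn : (Fin g → ℤ) × (Fin g → ℤ) =>
      ‖eT g N Ω v mn.1 * eT g N Ω w mn.2‖ := hsum_v.mul_norm hsum_w
  have hft : ∀ t : Fin g → Fin 2, Summable (f t) := by
    intro t
    refine Summable.of_norm ?_
    refine hfn.congr fun mn => ?_
    rw [hf_def]
    dsimp only
    simp only [norm_mul, norm_sg, one_mul]
  have e1 : riemannF g N Ω c v w = ∑ t : Fin g → Fin 2, ∑' mn, f t mn := by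
    unfold riemannF
    exact Finset.sum_congr rfl fun t _ => step1 t
  have e2 : (∑ t : Fin g → Fin 2, ∑' mn, f t mn)
      = ∑' mn : (Fin g → ℤ) × (Fin g → ℤ), ∑ t : Fin g → Fin 2, f t mn :=
    (Summable.tsum_finsetSum fun t _ => hft t).symm
  set F : ((Fin g → ℤ) × (Fin g → ℤ)) → ℂ := fun mn =>
    (if ∀ i, Even (cInt g c i + mn.1 i + mn.2 i) then (2 : ℂ) ^ g else 0)
      * (eT g N Ω v mn.1 * eT g N Ω w mn.2) with hF_def
  have e3 : (∑' mn : (Fin g → ℤ) × (Fin g → ℤ), ∑ t : Fin g → Fin 2, f t mn)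
      = ∑' mn, F mn := by
    refine tsum_congr fun mn => ?_
    rw [hf_def, hF_def]
    dsimp only
    rw [← Finset.sum_mul, sum_sg]
  set ι : ((Fin g → ℤ) × (Fin g → ℤ)) → ((Fin g → ℤ) × (Fin g → ℤ)) := fun kj =>
    (fun i => cInt g c i + kj.1 i + kj.2 i, fun i => kj.1 i - kj.2 i) with hι_def
  have hinj : Function.Injective ι := by
    intro a b hab
    rw [hι_def] at hab
    have h1 := congrArg Prod.fst hab
    have h2 := congrArg Prod.snd hab
    dsimp at h1 h2
    refine Prod.ext ?_ ?_ <;> funext i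
    · have e1 : cInt g c i + a.1 i + a.2 i = cInt g c i + b.1 i + b.2 i := congrFun h1 i
      have e2 : a.1 i - a.2 i = b.1 i - b.2 i := congrFun h2 i
      omega
    · have e1 : cInt g c i + a.1 i + a.2 i = cInt g c i + b.1 i + b.2 i := congrFun h1 i
      have e2 : a.1 i - a.2 i = b.1 i - b.2 i := congrFun h2 i
      omega
  have hsupp : ∀ mn, mn ∉ Set.range ι → F mn = 0 := by
    intro mn hmn
    by_cases hev : ∀ i, Even (cInt g c i + mn.1 i + mn.2 i)
    · exfalso
      apply hmn
      have hspec : ∀ i, cInt g c i + mn.1 i + mn.2 i = (hev i).choose + (hev i).choose :=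
        fun i => (hev i).choose_spec
      refine ⟨(fun i => (hev i).choose - cInt g c i,
        fun i => (hev i).choose - cInt g c i - mn.2 i), ?_⟩
      rw [hι_def]
      refine Prod.ext ?_ ?_ <;> funext i <;> (have := hspec i; dsimp; omega)
    · rw [hF_def]
      dsimp only
      rw [if_neg hev, zero_mul]
  have e4 : (∑' mn, F mn) = ∑' kj : (Fin g → ℤ) × (Fin g → ℤ), F (ι kj) :=
    (hinj.tsum_eq (Function.support_subset_iff'.mpr hsupp)).symm
  have e5 : (∑' kj : (Fin g → ℤ) × (Fin g → ℤ), F (ι kj))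
      = ∑' kj : (Fin g → ℤ) × (Fin g → ℤ), (2 : ℂ) ^ g *
          (hT g N Ω (v + w) (fun i => cInt g c i + 2 * kj.1 i)
            * hT g N Ω (v - w) (fun i => cInt g c i + 2 * kj.2 i)) := by
    refine tsum_congr fun kj => ?_
    rw [hF_def, hι_def]
    dsimp only
    rw [if_pos (fun i => ⟨cInt g c i + kj.1 i, by ring⟩)]
    rw [eT_mul_eT g N Ω hN c v w kj.1 kj.2]
  have hshift1 := summable_norm_hT_shift g N Ω hΩ hg hN c (v + w)
  have hshift2 := summable_norm_hT_shift g N Ω hΩ hg hN c (v - w)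
  have e6 : (∑' kj : (Fin g → ℤ) × (Fin g → ℤ), (2 : ℂ) ^ g *
          (hT g N Ω (v + w) (fun i => cInt g c i + 2 * kj.1 i)
            * hT g N Ω (v - w) (fun i => cInt g c i + 2 * kj.2 i)))
      = 2 ^ g * (G g N Ω c (v + w) * G g N Ω c (v - w)) := by
    rw [tsum_mul_left]
    congr 1
    rw [G, G, tsum_mul_tsum_of_summable_norm hshift1 hshift2]
  rw [e1, e2, e3, e4, e5, e6, mul_assoc]

end

end RA


/-- analytic form of the Riemann equations for the theta null
point, Theorem 2.6 of the paper: if `(v₁+w₁, v₁−w₁, x₁+y₁, x₁−y₁)` is a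
permutation of `(v₂+w₂, v₂−w₂, x₂+y₂, x₂−y₂)`, then for every character `c`
one has `F_c(v₁,w₁)·F_c(x₁,y₁) = F_c(v₂,w₂)·F_c(x₂,y₂)`. -/
theorem riemann_equations (g : ℕ) (hg : 1 ≤ g) (N : ℕ) (hN : 2 ≤ N) (hNe : Even N)
    (Ω : Matrix (Fin g) (Fin g) ℂ) (hΩ : IsSiegel Ω)
    (v₁ w₁ x₁ y₁ v₂ w₂ x₂ y₂ : Fin g → ℤ)
    (hperm : ∃ σ : Equiv.Perm (Fin 4),
      ∀ k : Fin 4,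
        (![v₁ + w₁, v₁ - w₁, x₁ + y₁, x₁ - y₁] : Fin 4 → (Fin g → ℤ)) k =
          (![v₂ + w₂, v₂ - w₂, x₂ + y₂, x₂ - y₂] : Fin 4 → (Fin g → ℤ)) (σ k))
    (c : Fin g → Fin 2) :
    riemannF g N Ω c v₁ w₁ * riemannF g N Ω c x₁ y₁ =
      riemannF g N Ω c v₂ w₂ * riemannF g N Ω c x₂ y₂ := by
  obtain ⟨σ, hσ⟩ := hperm
  have key : ∀ a b : Fin g → ℤ, riemannF g N Ω c a b
      = 2 ^ g * RA.G g N Ω c (a + b) * RA.G g N Ω c (a - b) :=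
    fun a b => RA.riemannF_eq g N Ω hg hN hNe hΩ c a b
  have h1 := Fin.prod_univ_four
    (f := fun k => RA.G g N Ω c ((![v₁ + w₁, v₁ - w₁, x₁ + y₁, x₁ - y₁]) k))
  have h2 := Fin.prod_univ_four
    (f := fun k => RA.G g N Ω c ((![v₂ + w₂, v₂ - w₂, x₂ + y₂, x₂ - y₂]) k))
  simp only [Matrix.cons_val_zero, Matrix.cons_val_one, Matrix.head_cons,
    Matrix.cons_val_two, Matrix.tail_cons, Matrix.cons_val_three, Matrix.head_fin_const] at h1 h2
  have hpp : (∏ k : Fin 4,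
        RA.G g N Ω c ((![v₁ + w₁, v₁ - w₁, x₁ + y₁, x₁ - y₁] : Fin 4 → (Fin g → ℤ)) k))
      = ∏ k : Fin 4,
        RA.G g N Ω c ((![v₂ + w₂, v₂ - w₂, x₂ + y₂, x₂ - y₂] : Fin 4 → (Fin g → ℤ)) k) := by
    calc (∏ k : Fin 4,
          RA.G g N Ω c ((![v₁ + w₁, v₁ - w₁, x₁ + y₁, x₁ - y₁] : Fin 4 → (Fin g → ℤ)) k))
        = ∏ k : Fin 4,
          RA.G g N Ω c ((![v₂ + w₂, v₂ - w₂, x₂ + y₂, x₂ - y₂] : Fin 4 → (Fin g → ℤ)) (σ k)) :=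
          Finset.prod_congr rfl fun k _ => by rw [hσ k]
      _ = _ := Equiv.prod_comp σ (fun k => RA.G g N Ω c ((![v₂ + w₂, v₂ - w₂, x₂ + y₂, x₂ - y₂] : Fin 4 → (Fin g → ℤ)) k))
  rw [h1, h2] at hpp
  rw [key, key, key, key]
  linear_combination 2 ^ g * 2 ^ g * hpp
end
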